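/- Let V be a type and a, b ∈ V. A stack history is a finite map from positive timestamps to pairs (pre, post) of lists over V; write ⊎ for disjoint union of such maps and dom h for the domain. Say h is continuous iff dom h = {1, …, last_stamp h} (where last_stamp h = max({0} ∪ dom h)), the first component of h(1) is the empty list when dom h is nonempty, and for every t with t, t+1 ∈ dom h the second component of h(t) equals the first component of h(t+1). Define final(h) as the second component of h(last_stamp h) when dom h is nonempty. Theorem: if h is continuous and h = (t₁ ↦ (vs₁, a :: vs₁)) ⊎ (t₂ ↦ (vs₂, b :: vs₂)) for some timestamps t₁ ≠ t₂ and lists vs₁, vs₂, then {t₁, t₂} = {1, 2} and final(h) = [b, a] or final(h) = [a, b]. -/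
import Mathlib


/-- A stack history: a finite map from positive timestamps to pairs
`(pre, post)` of lists. -/
abbrev SHist (V : Type) := Finmap (fun _ : ℕ+ => List V × List V)

/-- `last_stamp h = max ({0} ∪ dom h)`. -/
noncomputable def lastStamp {V : Type} (h : SHist V) : ℕ :=
  h.keys.sup (fun t => (t : ℕ))

/-- `h` is continuous: its domain is `{1, …, last_stamp h}`, the first
component of `h 1` is the empty list when the domain is nonempty, and the
second component of `h t` equals the first component of `h (t+1)` whenever
both timestamps are in the domain. -/
noncomputable def continuous {V : Type} (h : SHist V) : Prop :=
  (∀ t : ℕ+, t ∈ h ↔ (t : ℕ) ≤ lastStamp h) ∧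
  (h.keys.Nonempty → (h.lookup 1).map Prod.fst = some []) ∧
  (∀ t : ℕ+, t ∈ h → (t + 1) ∈ h →
    (h.lookup t).map Prod.snd = (h.lookup (t + 1)).map Prod.fst)

/-- `final h`: the second component of `h (last_stamp h)` when the domain is
nonempty (and the empty list otherwise). -/
noncomputable def final {V : Type} (h : SHist V) : List V :=
  if hpos : 0 < lastStamp h then
    ((h.lookup ⟨lastStamp h, hpos⟩).map Prod.snd).getD []
  else []

/-- if `h` is continuous and
`h = (t₁ ↦ (vs₁, a :: vs₁)) ⊎ (t₂ ↦ (vs₂, b :: vs₂))` with `t₁ ≠ t₂`, then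
`{t₁, t₂} = {1, 2}` and `final h` is `[b, a]` or `[a, b]`. -/
theorem two_pushes_final {V : Type} (a b : V) (h : SHist V)
    (t₁ t₂ : ℕ+) (vs₁ vs₂ : List V)
    (hcont : continuous h) (hne : t₁ ≠ t₂)
    (hh : h = Finmap.singleton t₁ (vs₁, a :: vs₁) ∪
              Finmap.singleton t₂ (vs₂, b :: vs₂)) :
    ({t₁, t₂} : Set ℕ+) = {1, 2} ∧
    (final h = [b, a] ∨ final h = [a, b]) := by
  obtain ⟨h1, h2, h3⟩ := hcont
  have hmem : ∀ t : ℕ+, t ∈ h ↔ t = t₁ ∨ t = t₂ := by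
    intro t
    simp [hh, Finmap.mem_union, Finmap.mem_singleton]
  have ht1 : t₁ ∈ h := (hmem t₁).mpr (Or.inl rfl)
  have ht2 : t₂ ∈ h := (hmem t₂).mpr (Or.inr rfl)
  have hle1 : (t₁ : ℕ) ≤ lastStamp h := (h1 t₁).mp ht1
  have hle2 : (t₂ : ℕ) ≤ lastStamp h := (h1 t₂).mp ht2
  have hnecoe : (t₁ : ℕ) ≠ (t₂ : ℕ) := fun e => hne (PNat.coe_injective e)
  have hp1 : 0 < (t₁ : ℕ) := t₁.pos
  have hp2 : 0 < (t₂ : ℕ) := t₂.pos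
  have hL2 : 2 ≤ lastStamp h := by omega
  have h1mem : (1 : ℕ+) ∈ h := (h1 1).mpr (by simpa using (by omega : 1 ≤ lastStamp h))
  have h2mem : (2 : ℕ+) ∈ h := (h1 2).mpr (by simpa using hL2)
  have hpos : 0 < lastStamp h := by omega
  have hLmem : (⟨lastStamp h, hpos⟩ : ℕ+) ∈ h := (h1 _).mpr le_rfl
  have e1 := (hmem 1).mp h1mem
  have e2 := (hmem 2).mp h2mem
  have eL := (hmem _).mp hLmem
  have hsucc : ((1 : ℕ+) + 1) = (2 : ℕ+) := rfl
  rcases e1 with e1 | e1 <;> rcases e2 with e2 | e2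
  · exact absurd (e1.trans e2.symm) (by decide)
  · -- t₁ = 1, t₂ = 2
    subst e1; subst e2
    have hL : lastStamp h = 2 := by
      rcases eL with e | e <;>
        · have := congrArg (fun x : ℕ+ => (x : ℕ)) e
          simp at this; omega
    refine ⟨rfl, Or.inl ?_⟩
    have hl1 : h.lookup 1 = some (vs₁, a :: vs₁) := by
      rw [hh, Finmap.lookup_union_left (by rw [Finmap.mem_singleton]),
        Finmap.lookup_singleton_eq]
    have hl2 : h.lookup 2 = some (vs₂, b :: vs₂) := by
      rw [hh, Finmap.lookup_union_right (by rw [Finmap.mem_singleton]; exact hne.symm),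
        Finmap.lookup_singleton_eq]
    have hne' : h.keys.Nonempty := ⟨1, Finmap.mem_keys.mpr h1mem⟩
    have hv1 : vs₁ = [] := by
      have := h2 hne'; rw [hl1] at this; simpa using this
    have hv2 : vs₂ = a :: vs₁ := by
      have := h3 1 h1mem (by rw [hsucc]; exact h2mem)
      rw [hl1, hsucc, hl2] at this
      simpa using this.symm
    have hkey : (⟨lastStamp h, hpos⟩ : ℕ+) = (2 : ℕ+) := by
      apply PNat.coe_injective
      show lastStamp h = ((2 : ℕ+) : ℕ)
      rw [hL]; rfl
    unfold final
    rw [dif_pos hpos, hkey, hl2, hv2, hv1]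
    simp
  · -- t₂ = 1, t₁ = 2
    subst e1; subst e2
    have hL : lastStamp h = 2 := by
      rcases eL with e | e <;>
        · have := congrArg (fun x : ℕ+ => (x : ℕ)) e
          simp at this; omega
    refine ⟨by ext x; simp [or_comm], Or.inr ?_⟩
    have hl1 : h.lookup 1 = some (vs₂, b :: vs₂) := by
      rw [hh, Finmap.lookup_union_right (by rw [Finmap.mem_singleton]; exact hne.symm),
        Finmap.lookup_singleton_eq]
    have hl2 : h.lookup 2 = some (vs₁, a :: vs₁) := by
      rw [hh, Finmap.lookup_union_left (by rw [Finmap.mem_singleton]),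
        Finmap.lookup_singleton_eq]
    have hne' : h.keys.Nonempty := ⟨1, Finmap.mem_keys.mpr h1mem⟩
    have hv2 : vs₂ = [] := by
      have := h2 hne'; rw [hl1] at this; simpa using this
    have hv1 : vs₁ = b :: vs₂ := by
      have := h3 1 h1mem (by rw [hsucc]; exact h2mem)
      rw [hl1, hsucc, hl2] at this
      simpa using this.symm
    have hkey : (⟨lastStamp h, hpos⟩ : ℕ+) = (2 : ℕ+) := by
      apply PNat.coe_injective
      show lastStamp h = ((2 : ℕ+) : ℕ)
      rw [hL]; rfl
    unfold final
    rw [dif_pos hpos, hkey, hl2, hv1, hv2]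
    simp
  · exact absurd (e1.trans e2.symm) (by decide)
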